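/- arXiv:1410.6127 — 15 statements merged into one kernel-verified Lean document; each statement's English description precedes it below -/
import Mathlib

section
/- In a poset category C, a class of morphisms J that is closed under pushouts lifts on the left of a morphism f : A → B if and only if there is no factorization of f as A → C → B with A → C in J and C ≠ A. -/
/-!
We model a bicomplete skeletal poset as a complete lattice `α`, viewed as a category
with a (unique) morphism `a → b` iff `a ≤ b`.  Products are infima, coproducts are
suprema, pushouts of `a → b` along `a → c` are `c → b ⊔ c`, pullbacks of `x → y`
along `z → y` are `x ⊓ z → z`.  A class of morphisms is a relation `α → α → Prop`.
-/

variable {α : Type*} [CompleteLattice α]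

/-- The morphism `a → b` lifts on the left of the morphism `x → y`: every commutative
square (i.e. `a ≤ x` and `b ≤ y`) admits a diagonal lift `b → x` (i.e. `b ≤ x`). -/
def Lifts (a b x y : α) : Prop := a ≤ x → b ≤ y → b ≤ x

/-!
A square from `x → y` to `f : A → B` has a lift iff its pushout `A → y ⊔ A` is an identity.
That pushout is in `J` and factors `f` through `y ⊔ A ≤ B`, so if `J`-maps cannot
factor `f` non-trivially, every lift exists. Conversely, lifting `A → C` against `f`
along the factorization `A → C → B` gives `C ≤ A`.
-/

theorem lifts_iff_sup_eq {x y A B : α} : Lifts x y A B ↔ (x ≤ A → y ≤ B → y ⊔ A = A) := by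
  simp only [Lifts, sup_eq_right]

theorem Lifts.eq_of_factor {A B C : α} (h : Lifts A C A B) (hAC : A ≤ C) (hCB : C ≤ B) :
    C = A :=
  le_antisymm (h le_rfl hCB) hAC

/-- In a poset category, a class `J` of morphisms closed under pushouts
lifts on the left of a morphism `f : A → B` iff there is no factorization `A → C → B`
with `A → C` in `J` and `C ≠ A`. -/
theorem liftingCriterion (J : α → α → Prop)
    (hJle : ∀ a b : α, J a b → a ≤ b)
    (hJpush : ∀ a b c : α, J a b → a ≤ c → J c (b ⊔ c))
    (A B : α) (hf : A ≤ B) :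
    (∀ x y : α, J x y → Lifts x y A B) ↔ ¬ ∃ C : α, J A C ∧ C ≤ B ∧ C ≠ A := by
  constructor
  · rintro hlift ⟨C, hAC, hCB, hCA⟩
    exact hCA ((hlift A C hAC).eq_of_factor (hJle A C hAC) hCB)
  · intro hfactor x y hxy
    refine lifts_iff_sup_eq.mpr fun hxA hyB => ?_
    by_contra hne
    exact hfactor ⟨y ⊔ A, hJpush x y A hxy hxA, sup_le hyB hf, hne⟩
end

section
/- Let C be a bicomplete poset, W a subcategory satisfying strong 2-of-3, and χ a choice of centers. If {f_i : A_i → B_i}_{i∈I} is a family of morphisms each belonging to J_χ, then the coproduct ∐_i f_i belongs to J_χ. -/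
/-!
We model a bicomplete skeletal poset as a complete lattice `α`, viewed as a category
with a (unique) morphism `a → b` iff `a ≤ b`.  Products are infima, coproducts are
suprema, pushouts of `a → b` along `a → c` are `c → b ⊔ c`, pullbacks of `x → y`
along `z → y` are `x ⊓ z → z`.  A class of morphisms is a relation `α → α → Prop`.
-/

variable {α : Type*} [CompleteLattice α]

/-- Strong 2-of-3: whenever a composite `a → b → c` lies in `W`, so do both factors. -/
def S2OF3 (W : α → α → Prop) : Prop :=
  ∀ a b c : α, a ≤ b → b ≤ c → W a c → W a b ∧ W b c

/-- A choice of centers: a functor (monotone map) `χ` sending every morphism of `W`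
to an identity, such that the square `a ⊓ χ a → χ a`, `a ⊓ χ a → a`, `a → a ⊔ χ a`,
`χ a → a ⊔ χ a` lies in `W` for every object `a`. -/
def IsCenters (W : α → α → Prop) (χ : α → α) : Prop :=
  Monotone χ ∧ (∀ a b : α, W a b → χ a = χ b) ∧
    ∀ a : α, W (a ⊓ χ a) (χ a) ∧ W (a ⊓ χ a) a ∧ W a (a ⊔ χ a) ∧ W (χ a) (a ⊔ χ a)

/-- `J_χ`: morphisms `a → b` of `W` such that the morphism `b → χ b` exists. -/
def Jc (W : α → α → Prop) (χ : α → α) (a b : α) : Prop := W a b ∧ b ≤ χ b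

/-- `Q_χ`: morphisms `a → b` of `W` such that the morphism `χ a → a` exists. -/
def Qc (W : α → α → Prop) (χ : α → α) (a b : α) : Prop := W a b ∧ χ a ≤ a

/-!
Each `B i` lies below `χ (B i) = χ (A i) ≤ χ (⨆ A)`, so `⨆ A → ⨆ B` factors the `W`-morphism
`⨆ A → ⨆ A ⊔ χ (⨆ A)` of the centre square, and strong 2-of-3 puts it in `W`. The condition
`b ≤ χ b` passes to suprema because `χ` is monotone.
-/

namespace IsCenters

variable {W : α → α → Prop} {χ : α → α}

theorem le_center_of_Jc (hχ : IsCenters W χ) {a b c : α} (hab : Jc W χ a b) (hac : a ≤ c) :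
    b ≤ χ c :=
  calc b ≤ χ b := hab.2
    _ = χ a := (hχ.2.1 a b hab.1).symm
    _ ≤ χ c := hχ.1 hac

theorem W_of_le_sup_center (hχ : IsCenters W χ) (hS : S2OF3 W) {a b : α} (hab : a ≤ b)
    (hb : b ≤ a ⊔ χ a) : W a b :=
  (hS a b (a ⊔ χ a) hab hb (hχ.2.2 a).2.2.1).1

end IsCenters

theorem Monotone.iSup_le_map_iSup {f : α → α} (hf : Monotone f) {ι : Type*} {B : ι → α}
    (hB : ∀ i, B i ≤ f (B i)) : ⨆ i, B i ≤ f (⨆ i, B i) :=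
  (iSup_mono hB).trans hf.le_map_iSup

theorem Jc_coproduct_general (W : α → α → Prop) (χ : α → α)
    (hWle : ∀ a b : α, W a b → a ≤ b)
    (hS : S2OF3 W) (hχ : IsCenters W χ)
    (ι : Type*) (A B : ι → α) (hf : ∀ i, Jc W χ (A i) (B i)) :
    Jc W χ (⨆ i, A i) (⨆ i, B i) := by
  have hAB : ⨆ i, A i ≤ ⨆ i, B i := iSup_mono fun i => hWle _ _ (hf i).1
  have hBχ : ⨆ i, B i ≤ χ (⨆ i, A i) :=
    iSup_le fun i => hχ.le_center_of_Jc (hf i) (le_iSup A i)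
  exact ⟨hχ.W_of_le_sup_center hS hAB (hBχ.trans le_sup_right),
    hχ.1.iSup_le_map_iSup fun i => (hf i).2⟩

/-- (Lemma on `J_χ`.)  If each `f i : A i → B i` lies in `J_χ`, then so
does the coproduct `⨆ A → ⨆ B`. -/
theorem Jc_coproduct (W : α → α → Prop) (χ : α → α)
    (hWle : ∀ a b : α, W a b → a ≤ b)
    (hWrefl : ∀ a : α, W a a)
    (hWtrans : ∀ a b c : α, W a b → W b c → W a c)
    (hS : S2OF3 W) (hχ : IsCenters W χ)
    (ι : Type*) (A B : ι → α) (hf : ∀ i, Jc W χ (A i) (B i)) :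
    Jc W χ (⨆ i, A i) (⨆ i, B i) :=
  Jc_coproduct_general W χ hWle hS hχ ι A B hf
end

section
/- Let C be a bicomplete poset, W a subcategory satisfying strong 2-of-3, and χ a choice of centers. If f : A → B is a morphism such that the identity on B lies in J_χ (i.e., B → χ(B) exists in W), then f lifts on the left of every morphism in Q_χ. In particular J_χ ⧄ Q_χ. -/
/-!
We model a bicomplete skeletal poset as a complete lattice `α`, viewed as a category
with a (unique) morphism `a → b` iff `a ≤ b`.  Products are infima, coproducts are
suprema, pushouts of `a → b` along `a → c` are `c → b ⊔ c`, pullbacks of `x → y`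
along `z → y` are `x ⊓ z → z`.  A class of morphisms is a relation `α → α → Prop`.
-/

variable {α : Type*} [CompleteLattice α]

/-- A lifting problem of `A → B` against `X → Y` only asks for `B ≤ X`, and
`B ≤ χ B ≤ χ Y = χ X ≤ X` because the functor `χ` collapses the `W`-morphism `X → Y`. -/
theorem lifts_of_le_center_of_Qc {W : α → α → Prop} {χ : α → α} (hmono : Monotone χ)
    (hWχ : ∀ a b : α, W a b → χ a = χ b) {A B X Y : α} (hB : B ≤ χ B) (hQ : Qc W χ X Y) :
    Lifts A B X Y := fun _ hBY =>
  calc B ≤ χ B := hB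
    _ ≤ χ Y := hmono hBY
    _ = χ X := (hWχ X Y hQ.1).symm
    _ ≤ X := hQ.2

theorem lifts_against_Qc_general (W : α → α → Prop) (χ : α → α)
    (hχ : IsCenters W χ) :
    (∀ A B : α, A ≤ B → Jc W χ B B →
      ∀ X Y : α, Qc W χ X Y → Lifts A B X Y) ∧
    (∀ A B X Y : α, Jc W χ A B → Qc W χ X Y → Lifts A B X Y) := by
  obtain ⟨hmono, hWχ, -⟩ := hχ
  exact ⟨fun _ _ _ hJ _ _ hQ => lifts_of_le_center_of_Qc hmono hWχ hJ.2 hQ,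
    fun _ _ _ _ hJ hQ => lifts_of_le_center_of_Qc hmono hWχ hJ.2 hQ⟩

/-- If `f : A → B` is a morphism such that `1_B ∈ J_χ` (i.e. `B → χ B`
exists), then `f` lifts on the left of every morphism of `Q_χ`; in particular
`J_χ ⧄ Q_χ`. -/
theorem lifts_against_Qc (W : α → α → Prop) (χ : α → α)
    (hWle : ∀ a b : α, W a b → a ≤ b)
    (hWrefl : ∀ a : α, W a a)
    (hWtrans : ∀ a b c : α, W a b → W b c → W a c)
    (hS : S2OF3 W) (hχ : IsCenters W χ) :
    (∀ A B : α, A ≤ B → Jc W χ B B →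
      ∀ X Y : α, Qc W χ X Y → Lifts A B X Y) ∧
    (∀ A B X Y : α, Jc W χ A B → Qc W χ X Y → Lifts A B X Y) :=
  lifts_against_Qc_general W χ hχ
end

section
/- Let C be a bicomplete skeletal poset, W a subcategory satisfying strong 2-of-3, and χ a choice of centers. Then any morphism f : A → B in C with χ(A) = χ(B) belongs to W. -/
/-!
We model a bicomplete skeletal poset as a complete lattice `α`, viewed as a category
with a (unique) morphism `a → b` iff `a ≤ b`.  Products are infima, coproducts are
suprema, pushouts of `a → b` along `a → c` are `c → b ⊔ c`, pullbacks of `x → y`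
along `z → y` are `x ⊓ z → z`.  A class of morphisms is a relation `α → α → Prop`.
-/

variable {α : Type*} [CompleteLattice α]

/-- The pushout square of centers turns `χ a → b ⊔ χ b` into a morphism of `W`, and strong
2-of-3 passes it on to the second factor of `χ a → a ⊔ χ a → b ⊔ χ b`. -/
theorem IsCenters.mem_sup_center {W : α → α → Prop} {χ : α → α} (hS : S2OF3 W)
    (hχ : IsCenters W χ) {a b : α} (hab : a ≤ b) (hcenter : χ a = χ b) :
    W (a ⊔ χ a) (b ⊔ χ b) := by
  have hχab : W (χ a) (b ⊔ χ b) := hcenter ▸ (hχ.2.2 b).2.2.2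
  exact (hS _ _ _ le_sup_right (sup_le_sup hab hcenter.le) hχab).2

theorem mem_W_of_center_eq_general (W : α → α → Prop) (χ : α → α)
    (hWtrans : ∀ a b c : α, W a b → W b c → W a c)
    (hS : S2OF3 W) (hχ : IsCenters W χ)
    (A B : α) (hAB : A ≤ B) (hcenter : χ A = χ B) :
    W A B := by
  have hA_center : W A (A ⊔ χ A) := (hχ.2.2 A).2.2.1
  have hA_sup : W A (B ⊔ χ B) := hWtrans _ _ _ hA_center (hχ.mem_sup_center hS hAB hcenter)
  exact (hS _ _ _ hAB le_sup_left hA_sup).1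

/-- Any morphism `f : A → B` with `χ A = χ B` belongs to `W`. -/
theorem mem_W_of_center_eq (W : α → α → Prop) (χ : α → α)
    (hWle : ∀ a b : α, W a b → a ≤ b)
    (hWrefl : ∀ a : α, W a a)
    (hWtrans : ∀ a b c : α, W a b → W b c → W a c)
    (hS : S2OF3 W) (hχ : IsCenters W χ)
    (A B : α) (hAB : A ≤ B) (hcenter : χ A = χ B) :
    W A B :=
  mem_W_of_center_eq_general W χ hWtrans hS hχ A B hAB hcenter
end

section
/- Let C be a bicomplete skeletal poset and W a subcategory satisfying strong 2-of-3. If χ₁ and χ₂ are two choices of centers, then the pointwise product functor χ₁ × χ₂ is also a choice of centers. -/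
/-!
We model a bicomplete skeletal poset as a complete lattice `α`, viewed as a category
with a (unique) morphism `a → b` iff `a ≤ b`.  Products are infima, coproducts are
suprema, pushouts of `a → b` along `a → c` are `c → b ⊔ c`, pullbacks of `x → y`
along `z → y` are `x ⊓ z → z`.  A class of morphisms is a relation `α → α → Prop`.
-/

variable {α : Type*} [CompleteLattice α]

/-! Write `c = χ₁ a ⊓ χ₂ a`. Since `a ⊓ χ₁ a → a` lies in `W`, `χ₂` takes the same value
`χ₂ a` on `a ⊓ χ₁ a`, so the center square of `χ₂` at `a ⊓ χ₁ a` puts `a ⊓ c → χ₂ a` and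
`a ⊓ c → a ⊓ χ₁ a` into `W`. The four legs of the square of `c` at `a` are then obtained from
these and from the squares of `χ₁` and `χ₂` at `a` by composing and by cancelling with strong
2-of-3, using `c ≤ χ₁ a` and `c ≤ χ₂ a`. -/

namespace S2OF3

variable {W : α → α → Prop} {a b c : α}

theorem left (hS : S2OF3 W) (hab : a ≤ b) (hbc : b ≤ c) (h : W a c) : W a b :=
  (hS a b c hab hbc h).1

theorem right (hS : S2OF3 W) (hab : a ≤ b) (hbc : b ≤ c) (h : W a c) : W b c :=
  (hS a b c hab hbc h).2

theorem self_sup_of_le (hS : S2OF3 W) (hbc : b ≤ c) (h : W a (a ⊔ c)) : W a (a ⊔ b) :=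
  hS.left le_sup_left (sup_le_sup_left hbc a) h

end S2OF3

namespace IsCenters

variable {W : α → α → Prop} {χ χ₁ χ₂ : α → α} {a b : α}

protected theorem monotone (h : IsCenters W χ) : Monotone χ := h.1

theorem map_eq_of_W (h : IsCenters W χ) (hab : W a b) : χ a = χ b :=
  h.2.1 a b hab

theorem inf_center (h : IsCenters W χ) (a : α) : W (a ⊓ χ a) (χ a) := (h.2.2 a).1

theorem inf_self (h : IsCenters W χ) (a : α) : W (a ⊓ χ a) a := (h.2.2 a).2.1

theorem self_sup (h : IsCenters W χ) (a : α) : W a (a ⊔ χ a) := (h.2.2 a).2.2.1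

theorem center_sup (h : IsCenters W χ) (a : α) : W (χ a) (a ⊔ χ a) := (h.2.2 a).2.2.2

theorem inf_center_of_W (h : IsCenters W χ) (hba : W b a) : W (b ⊓ χ a) (χ a) :=
  h.map_eq_of_W hba ▸ h.inf_center b

theorem inf_self_of_W (h : IsCenters W χ) (hba : W b a) : W (b ⊓ χ a) b :=
  h.map_eq_of_W hba ▸ h.inf_self b

theorem inf_inf_center_right (h₁ : IsCenters W χ₁) (h₂ : IsCenters W χ₂) (a : α) :
    W (a ⊓ (χ₁ a ⊓ χ₂ a)) (χ₂ a) :=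
  inf_assoc a (χ₁ a) (χ₂ a) ▸ h₂.inf_center_of_W (h₁.inf_self a)

theorem inf_inf_center_inf_left (h₁ : IsCenters W χ₁) (h₂ : IsCenters W χ₂) (a : α) :
    W (a ⊓ (χ₁ a ⊓ χ₂ a)) (a ⊓ χ₁ a) :=
  inf_assoc a (χ₁ a) (χ₂ a) ▸ h₂.inf_self_of_W (h₁.inf_self a)

theorem inf_inf_center_inf (hS : S2OF3 W) (h₁ : IsCenters W χ₁) (h₂ : IsCenters W χ₂) (a : α) :
    W (a ⊓ (χ₁ a ⊓ χ₂ a)) (χ₁ a ⊓ χ₂ a) :=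
  hS.left inf_le_right inf_le_right (h₁.inf_inf_center_right h₂ a)

theorem inf_inf_center_self (hWtrans : ∀ a b c : α, W a b → W b c → W a c)
    (h₁ : IsCenters W χ₁) (h₂ : IsCenters W χ₂) (a : α) : W (a ⊓ (χ₁ a ⊓ χ₂ a)) a :=
  hWtrans _ _ _ (h₁.inf_inf_center_inf_left h₂ a) (h₁.inf_self a)

theorem self_sup_inf_center (hS : S2OF3 W) (h₁ : IsCenters W χ₁) (a : α) :
    W a (a ⊔ (χ₁ a ⊓ χ₂ a)) :=
  hS.self_sup_of_le inf_le_left (h₁.self_sup a)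

theorem center_inf_center_sup (hWtrans : ∀ a b c : α, W a b → W b c → W a c)
    (hS : S2OF3 W) (h₁ : IsCenters W χ₁) (h₂ : IsCenters W χ₂) (a : α) :
    W (χ₁ a ⊓ χ₂ a) (a ⊔ (χ₁ a ⊓ χ₂ a)) := by
  have hc₂ : W (χ₁ a ⊓ χ₂ a) (χ₂ a) :=
    hS.right inf_le_right inf_le_right (h₁.inf_inf_center_right h₂ a)
  have hsup : W (χ₁ a ⊓ χ₂ a) (a ⊔ χ₂ a) := hWtrans _ _ _ hc₂ (h₂.center_sup a)
  exact hS.left le_sup_right (sup_le_sup_left inf_le_right a) hsup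

end IsCenters

theorem centers_product_general (W : α → α → Prop) (χ₁ χ₂ : α → α)
    (hWtrans : ∀ a b c : α, W a b → W b c → W a c)
    (hS : S2OF3 W) (h₁ : IsCenters W χ₁) (h₂ : IsCenters W χ₂) :
    IsCenters W (fun a => χ₁ a ⊓ χ₂ a) :=
  ⟨h₁.monotone.inf h₂.monotone,
    fun _ _ hab => congrArg₂ (· ⊓ ·) (h₁.map_eq_of_W hab) (h₂.map_eq_of_W hab),
    fun a => ⟨h₁.inf_inf_center_inf hS h₂ a, h₁.inf_inf_center_self hWtrans h₂ a,
      h₁.self_sup_inf_center hS a, h₁.center_inf_center_sup hWtrans hS h₂ a⟩⟩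

/-- If `χ₁` and `χ₂` are two choices of centers, then their pointwise
product `a ↦ χ₁ a ⊓ χ₂ a` is again a choice of centers. -/
theorem centers_product (W : α → α → Prop) (χ₁ χ₂ : α → α)
    (hWle : ∀ a b : α, W a b → a ≤ b)
    (hWrefl : ∀ a : α, W a a)
    (hWtrans : ∀ a b c : α, W a b → W b c → W a c)
    (hS : S2OF3 W) (h₁ : IsCenters W χ₁) (h₂ : IsCenters W χ₂) :
    IsCenters W (fun a => χ₁ a ⊓ χ₂ a) :=
  centers_product_general W χ₁ χ₂ hWtrans hS h₁ h₂
end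

section
/- In any model structure on a poset category, the weak equivalences satisfy strong 2-of-3: if f = gh and f is a weak equivalence, then both g and h are weak equivalences. -/
/-!
We model a bicomplete skeletal poset as a complete lattice `α`, viewed as a category
with a (unique) morphism `a → b` iff `a ≤ b`.  Products are infima, coproducts are
suprema, pushouts of `a → b` along `a → c` are `c → b ⊔ c`, pullbacks of `x → y`
along `z → y` are `x ⊓ z → z`.  A class of morphisms is a relation `α → α → Prop`.
-/

variable {α : Type*} [CompleteLattice α]

/-- A model structure on the poset `α`: three classes of morphisms (weak equivalences,
cofibrations, fibrations), each a class of genuine morphisms (`≤`), with identities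
among the weak equivalences, 2-of-3, and the two weak factorization systems
(cofibrations, acyclic fibrations) and (acyclic cofibrations, fibrations):
mutual lifting, maximality of both classes with respect to lifting, and factorizations. -/
structure ModelStr (α : Type*) [CompleteLattice α] where
  We : α → α → Prop
  Cof : α → α → Prop
  Fib : α → α → Prop
  we_le : ∀ a b : α, We a b → a ≤ b
  cof_le : ∀ a b : α, Cof a b → a ≤ b
  fib_le : ∀ a b : α, Fib a b → a ≤ b
  we_refl : ∀ a : α, We a a
  two_of_three₁ : ∀ a b c : α, a ≤ b → b ≤ c → We a b → We b c → We a c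
  two_of_three₂ : ∀ a b c : α, a ≤ b → b ≤ c → We a b → We a c → We b c
  two_of_three₃ : ∀ a b c : α, a ≤ b → b ≤ c → We b c → We a c → We a b
  lift₁ : ∀ a b x y : α, Cof a b → Fib x y → We x y → Lifts a b x y
  lift₂ : ∀ a b x y : α, Cof a b → We a b → Fib x y → Lifts a b x y
  max₁L : ∀ a b : α, a ≤ b → (∀ x y : α, Fib x y → We x y → Lifts a b x y) → Cof a b
  max₁R : ∀ x y : α, x ≤ y → (∀ a b : α, Cof a b → Lifts a b x y) → Fib x y ∧ We x y
  max₂L : ∀ a b : α, a ≤ b → (∀ x y : α, Fib x y → Lifts a b x y) → Cof a b ∧ We a b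
  max₂R : ∀ x y : α, x ≤ y → (∀ a b : α, Cof a b → We a b → Lifts a b x y) → Fib x y
  fact₁ : ∀ a b : α, a ≤ b → ∃ m : α, Cof a m ∧ Fib m b ∧ We m b
  fact₂ : ∀ a b : α, a ≤ b → ∃ m : α, Cof a m ∧ We a m ∧ Fib m b

/-!
Factor `a → c` as an acyclic cofibration `a → m` followed by a fibration `m → c`, which is
acyclic by 2-of-3. In a poset, `b ⊓ m → b` is the pullback of the acyclic fibration `m → c`,
while `b ⊓ m → m` is an acyclic cofibration because it is the second factor of `a → b ⊓ m → m`
and every lifting problem against it is one against `a → m`. Composing, `b ⊓ m → c` is a weak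
equivalence, and 2-of-3 twice gives `b → c` and then `a → b`.
-/

namespace ModelStr

variable (M : ModelStr α)

def AcyclicFib (x y : α) : Prop := M.Fib x y ∧ M.We x y

def AcyclicCof (a b : α) : Prop := M.Cof a b ∧ M.We a b

variable {M}

theorem AcyclicFib.pullback {x y z : α} (h : M.AcyclicFib x y) (hzy : z ≤ y) :
    M.AcyclicFib (z ⊓ x) z :=
  M.max₁R _ _ inf_le_left fun _ _ hcof hux hvz =>
    le_inf hvz (M.lift₁ _ _ _ _ hcof h.1 h.2 (hux.trans inf_le_right) (hvz.trans hzy))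

theorem AcyclicCof.of_intermediate {a b c : α} (h : M.AcyclicCof a c) (hab : a ≤ b)
    (hbc : b ≤ c) : M.AcyclicCof b c :=
  M.max₂L _ _ hbc fun _ _ hfib hbx hcy => M.lift₂ _ _ _ _ h.1 h.2 hfib (hab.trans hbx) hcy

end ModelStr

/-- In any model structure on a poset, the weak equivalences satisfy
strong 2-of-3: if `f = g ∘ h` (i.e. `a ≤ b ≤ c`) and `f : a → c` is a weak equivalence,
then so are both `h : a → b` and `g : b → c`. -/
theorem strong_two_of_three (M : ModelStr α) :
    ∀ a b c : α, a ≤ b → b ≤ c → M.We a c → M.We a b ∧ M.We b c := by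
  intro a b c hab hbc hac
  obtain ⟨m, hcof, hwe_am, hfib⟩ := M.fact₂ a c (hab.trans hbc)
  have ham : a ≤ m := M.we_le _ _ hwe_am
  have hmc : m ≤ c := M.fib_le _ _ hfib
  have ham_acyclic : M.AcyclicCof a m := ⟨hcof, hwe_am⟩
  have hmc_acyclic : M.AcyclicFib m c := ⟨hfib, M.two_of_three₂ a m c ham hmc hwe_am hac⟩
  have hpullback : M.AcyclicFib (b ⊓ m) b := hmc_acyclic.pullback hbc
  have hinf_m : M.AcyclicCof (b ⊓ m) m :=
    ham_acyclic.of_intermediate (le_inf hab ham) inf_le_right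
  have hinf_c : M.We (b ⊓ m) c := M.two_of_three₁ _ _ _ inf_le_right hmc hinf_m.2 hmc_acyclic.2
  have hwe_bc : M.We b c := M.two_of_three₂ _ _ _ inf_le_left hbc hpullback.2 hinf_c
  exact ⟨M.two_of_three₃ a b c hab hbc hwe_bc hac, hwe_bc⟩
end

section
/- Let C be a poset with model structure, B a cofibrant object, and f : A → B any morphism. Then f is a cofibration. Dually, any morphism out of a fibrant object is a fibration. -/
/-!
We model a bicomplete skeletal poset as a complete lattice `α`, viewed as a category
with a (unique) morphism `a → b` iff `a ≤ b`.  Products are infima, coproducts are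
suprema, pushouts of `a → b` along `a → c` are `c → b ⊔ c`, pullbacks of `x → y`
along `z → y` are `x ⊓ z → z`.  A class of morphisms is a relation `α → α → Prop`.
-/

variable {α : Type*} [CompleteLattice α]

namespace ModelStr

variable (M : ModelStr α) {a a' b x y y' : α}

-- In a poset a square from `a → b` to `x → y` is also a square from `a' → b` when `a' ≤ a`,
-- so lifts against `a' → b` are lifts against `a → b`; dually for fibrations.
theorem cof_of_cof_of_source_le (h : M.Cof a' b) (ha : a' ≤ a) (hab : a ≤ b) : M.Cof a b :=
  M.max₁L a b hab fun x y hf hw hax hby => M.lift₁ a' b x y h hf hw (ha.trans hax) hby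

theorem fib_of_fib_of_le_target (h : M.Fib x y') (hy : y ≤ y') (hxy : x ≤ y) : M.Fib x y :=
  M.max₂R x y hxy fun a b hc hw hax hby => M.lift₂ a b x y' hc hw h hax (hby.trans hy)

end ModelStr

/-- Any morphism into a cofibrant object is a cofibration; dually, any
morphism out of a fibrant object is a fibration. -/
theorem cofib_into_cofibrant (M : ModelStr α) :
    (∀ A B : α, M.Cof ⊥ B → A ≤ B → M.Cof A B) ∧
    (∀ A B : α, M.Fib A ⊤ → A ≤ B → M.Fib A B) :=
  ⟨fun _ _ hB hAB => M.cof_of_cof_of_source_le hB bot_le hAB,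
    fun _ _ hA hAB => M.fib_of_fib_of_le_target hA le_top hAB⟩
end

section
/- Every model structure on a bicomplete skeletal poset C determines a choice of centers: each weak equivalence class contains a unique fibrant-cofibrant object χ(A), and the assignment A ↦ χ(A) defines a functor satisfying the center axioms. -/
/-!
We model a bicomplete skeletal poset as a complete lattice `α`, viewed as a category
with a (unique) morphism `a → b` iff `a ≤ b`.  Products are infima, coproducts are
suprema, pushouts of `a → b` along `a → c` are `c → b ⊔ c`, pullbacks of `x → y`
along `z → y` are `x ⊓ z → z`.  A class of morphisms is a relation `α → α → Prop`.
-/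

variable {α : Type*} [CompleteLattice α]

/-!
The center of `a` is `χ a = R (Q a)`, where `⊥ → Q a → a` factors `⊥ → a` as a cofibration
followed by an acyclic fibration and `Q a → R (Q a) → ⊤` factors `Q a → ⊤` as an acyclic
cofibration followed by a fibration. In a poset a lifting problem is solvable exactly when
the diagonal inequality holds, so the lifting axioms become inequalities: this makes `Q`
and `R` monotone, shows that a weak equivalence from a fibrant to a cofibrant object is an
identity, and hence that `χ` is constant on weak equivalence classes. The center axioms come from pulling back the
acyclic fibration `Q a → a` along `a ⊓ χ a → a` and pushing out the acyclic cofibration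
`Q a → χ a` along `Q a → a`.
-/

namespace ModelStr

variable (M : ModelStr α) {a b c d : α}

theorem we_trans (hab : M.We a b) (hbc : M.We b c) : M.We a c :=
  M.two_of_three₁ a b c (M.we_le a b hab) (M.we_le b c hbc) hab hbc

theorem we_left_iff_we_right (hbc : b ≤ c) (hcd : c ≤ d) (hbd : M.We b d) :
    M.We b c ↔ M.We c d :=
  ⟨fun hbc' => M.two_of_three₂ b c d hbc hcd hbc' hbd,
    fun hcd' => M.two_of_three₃ b c d hbc hcd hcd' hbd⟩

theorem cof_trans (hab : M.Cof a b) (hbc : M.Cof b c) : M.Cof a c := by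
  have hb := M.cof_le b c hbc
  refine M.max₁L a c ((M.cof_le a b hab).trans hb) fun x y hxy hwxy hax hcy => ?_
  exact M.lift₁ b c x y hbc hxy hwxy (M.lift₁ a b x y hab hxy hwxy hax (hb.trans hcy)) hcy

theorem le_of_cofibrant_of_acyclic_fib (hc : M.Cof ⊥ c) (hf : M.Fib a b) (hw : M.We a b)
    (hcb : c ≤ b) : c ≤ a :=
  M.lift₁ ⊥ c a b hc hf hw bot_le hcb

theorem le_of_acyclic_cof_of_fibrant (hc : M.Cof a b) (hw : M.We a b) (hf : M.Fib c ⊤)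
    (hac : a ≤ c) : b ≤ c :=
  M.lift₂ a b c ⊤ hc hw hf hac le_top

theorem acyclic_fib_pullback (hf : M.Fib a b) (hw : M.We a b) (hcb : c ≤ b) :
    M.Fib (a ⊓ c) c ∧ M.We (a ⊓ c) c :=
  M.max₁R _ c inf_le_right fun _ v hcof hu hv =>
    le_inf (M.lift₁ _ v a b hcof hf hw (hu.trans inf_le_left) (hv.trans hcb)) hv

theorem acyclic_cof_pushout (hc : M.Cof a b) (hw : M.We a b) (hac : a ≤ c) :
    M.Cof c (c ⊔ b) ∧ M.We c (c ⊔ b) :=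
  M.max₂L c _ le_sup_left fun x _ hfib hx hy =>
    sup_le hx (M.lift₂ a b x _ hc hw hfib (hac.trans hx) (le_sup_right.trans hy))

theorem eq_of_we_of_fibrant_of_cofibrant (hw : M.We a b) (ha : M.Fib a ⊤) (hb : M.Cof ⊥ b) :
    a = b := by
  have hab := M.we_le a b hw
  obtain ⟨m, hcof, hfib, hmb⟩ := M.fact₁ a b hab
  have ham : M.We a m :=
    (M.we_left_iff_we_right (M.cof_le a m hcof) (M.fib_le m b hfib) hw).2 hmb
  have hbm : b ≤ m := M.le_of_cofibrant_of_acyclic_fib hb hfib hmb le_rfl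
  have hma : m ≤ a := M.le_of_acyclic_cof_of_fibrant hcof ham ha le_rfl
  exact le_antisymm hab (hbm.trans hma)

noncomputable def cofibrantReplacement (a : α) : α := (M.fact₁ ⊥ a bot_le).choose

noncomputable def fibrantReplacement (a : α) : α := (M.fact₂ a ⊤ le_top).choose

local notation "Q" => M.cofibrantReplacement
local notation "R" => M.fibrantReplacement

theorem cofibrant_cofibrantReplacement (a : α) : M.Cof ⊥ (Q a) :=
  (M.fact₁ ⊥ a bot_le).choose_spec.1

theorem fib_cofibrantReplacement (a : α) : M.Fib (Q a) a :=
  (M.fact₁ ⊥ a bot_le).choose_spec.2.1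

theorem we_cofibrantReplacement (a : α) : M.We (Q a) a :=
  (M.fact₁ ⊥ a bot_le).choose_spec.2.2

theorem cof_fibrantReplacement (a : α) : M.Cof a (R a) :=
  (M.fact₂ a ⊤ le_top).choose_spec.1

theorem we_fibrantReplacement (a : α) : M.We a (R a) :=
  (M.fact₂ a ⊤ le_top).choose_spec.2.1

theorem fibrant_fibrantReplacement (a : α) : M.Fib (R a) ⊤ :=
  (M.fact₂ a ⊤ le_top).choose_spec.2.2

theorem cofibrantReplacement_le (a : α) : Q a ≤ a :=
  M.we_le _ _ (M.we_cofibrantReplacement a)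

theorem le_fibrantReplacement (a : α) : a ≤ R a :=
  M.we_le _ _ (M.we_fibrantReplacement a)

theorem monotone_cofibrantReplacement : Monotone Q := fun a b hab =>
  M.le_of_cofibrant_of_acyclic_fib (M.cofibrant_cofibrantReplacement a)
    (M.fib_cofibrantReplacement b) (M.we_cofibrantReplacement b)
    ((M.cofibrantReplacement_le a).trans hab)

theorem monotone_fibrantReplacement : Monotone R := fun a b hab =>
  M.le_of_acyclic_cof_of_fibrant (M.cof_fibrantReplacement a) (M.we_fibrantReplacement a)
    (M.fibrant_fibrantReplacement b) (hab.trans (M.le_fibrantReplacement b))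

theorem we_cofibrantReplacement_of_we (h : M.We a b) : M.We (Q a) (Q b) :=
  (M.we_left_iff_we_right (M.monotone_cofibrantReplacement (M.we_le a b h))
      (M.cofibrantReplacement_le b) (M.we_trans (M.we_cofibrantReplacement a) h)).2
    (M.we_cofibrantReplacement b)

theorem we_fibrantReplacement_of_we (h : M.We a b) : M.We (R a) (R b) :=
  (M.we_left_iff_we_right (M.le_fibrantReplacement a)
      (M.monotone_fibrantReplacement (M.we_le a b h))
      (M.we_trans h (M.we_fibrantReplacement b))).1
    (M.we_fibrantReplacement a)

theorem cofibrantReplacement_eq_self (ha : M.Cof ⊥ a) : Q a = a :=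
  le_antisymm (M.cofibrantReplacement_le a)
    (M.le_of_cofibrant_of_acyclic_fib ha (M.fib_cofibrantReplacement a)
      (M.we_cofibrantReplacement a) le_rfl)

theorem fibrantReplacement_eq_self (ha : M.Fib a ⊤) : R a = a :=
  le_antisymm
    (M.le_of_acyclic_cof_of_fibrant (M.cof_fibrantReplacement a) (M.we_fibrantReplacement a)
      ha le_rfl)
    (M.le_fibrantReplacement a)

noncomputable def center (a : α) : α := R (Q a)

theorem cofibrant_center (a : α) : M.Cof ⊥ (M.center a) :=
  M.cof_trans (M.cofibrant_cofibrantReplacement a) (M.cof_fibrantReplacement _)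

theorem fibrant_center (a : α) : M.Fib (M.center a) ⊤ := M.fibrant_fibrantReplacement _

theorem cofibrantReplacement_le_center (a : α) : Q a ≤ M.center a := M.le_fibrantReplacement _

theorem we_cofibrantReplacement_center (a : α) : M.We (Q a) (M.center a) :=
  M.we_fibrantReplacement _

theorem monotone_center : Monotone M.center :=
  M.monotone_fibrantReplacement.comp M.monotone_cofibrantReplacement

theorem center_eq_of_we (h : M.We a b) : M.center a = M.center b :=
  M.eq_of_we_of_fibrant_of_cofibrant
    (M.we_fibrantReplacement_of_we (M.we_cofibrantReplacement_of_we h))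
    (M.fibrant_center a) (M.cofibrant_center b)

theorem center_eq_of_eqvGen (h : Relation.EqvGen M.We a b) : M.center a = M.center b :=
  congrArg (Quot.lift M.center fun _ _ => M.center_eq_of_we) (Quot.eqvGen_sound h)

theorem eqvGen_we_center (a : α) : Relation.EqvGen M.We a (M.center a) :=
  .trans _ _ _ (.symm _ _ (.rel _ _ (M.we_cofibrantReplacement a)))
    (.rel _ _ (M.we_cofibrantReplacement_center a))

theorem center_eq_self (ha : M.Cof ⊥ a) (ha' : M.Fib a ⊤) : M.center a = a := by
  rw [center, M.cofibrantReplacement_eq_self ha, M.fibrantReplacement_eq_self ha']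

theorem center_axioms (a : α) :
    M.We (a ⊓ M.center a) (M.center a) ∧ M.We (a ⊓ M.center a) a ∧
      M.We a (a ⊔ M.center a) ∧ M.We (M.center a) (a ⊔ M.center a) := by
  have hQa := M.cofibrantReplacement_le a
  have hQχ := M.cofibrantReplacement_le_center a
  have hQ_inf : Q a ≤ a ⊓ M.center a := le_inf hQa hQχ
  have hpull : M.We (Q a) (a ⊓ M.center a) := by
    simpa only [inf_eq_left.mpr hQ_inf] using (M.acyclic_fib_pullback
      (M.fib_cofibrantReplacement a) (M.we_cofibrantReplacement a)
      (inf_le_left : a ⊓ M.center a ≤ a)).2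
  have hpush : M.We a (a ⊔ M.center a) :=
    (M.acyclic_cof_pushout (M.cof_fibrantReplacement (Q a))
      (M.we_cofibrantReplacement_center a) hQa).2
  refine ⟨?_, ?_, hpush, ?_⟩
  · exact (M.we_left_iff_we_right hQ_inf inf_le_right
      (M.we_cofibrantReplacement_center a)).1 hpull
  · exact (M.we_left_iff_we_right hQ_inf inf_le_left (M.we_cofibrantReplacement a)).1 hpull
  · exact (M.we_left_iff_we_right hQχ le_sup_right
      (M.we_trans (M.we_cofibrantReplacement a) hpush)).1 (M.we_cofibrantReplacement_center a)

end ModelStr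

/-- Every model structure on a bicomplete skeletal poset determines a
choice of centers: each weak equivalence class (zigzag-connected component of the weak
equivalences) contains a unique cofibrant-fibrant object `χ a`, and `a ↦ χ a` is a
functor satisfying the center axioms. -/
theorem modelStr_gives_centers (M : ModelStr α) :
    ∃ χ : α → α, IsCenters M.We χ ∧
      ∀ a : α, M.Cof ⊥ (χ a) ∧ M.Fib (χ a) ⊤ ∧ Relation.EqvGen M.We a (χ a) ∧
        (∀ b : α, M.Cof ⊥ b → M.Fib b ⊤ → Relation.EqvGen M.We a b → b = χ a) :=
  ⟨M.center, ⟨M.monotone_center, fun _ _ => M.center_eq_of_we, M.center_axioms⟩,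
    fun a => ⟨M.cofibrant_center a, M.fibrant_center a, M.eqvGen_we_center a,
      fun b hb hb' hab => by rw [M.center_eq_of_eqvGen hab, M.center_eq_self hb hb']⟩⟩
end

section
/- In a model structure on a poset, factorizations of a morphism into an acyclic cofibration followed by a fibration (or a cofibration followed by an acyclic fibration) are unique. -/
/-!
We model a bicomplete skeletal poset as a complete lattice `α`, viewed as a category
with a (unique) morphism `a → b` iff `a ≤ b`.  Products are infima, coproducts are
suprema, pushouts of `a → b` along `a → c` are `c → b ⊔ c`, pullbacks of `x → y`
along `z → y` are `x ⊓ z → z`.  A class of morphisms is a relation `α → α → Prop`.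
-/

variable {α : Type*} [CompleteLattice α]

theorem eq_of_lifts_of_lifts {a b m₁ m₂ : α} (h₁₂ : Lifts a m₁ m₂ b) (h₂₁ : Lifts a m₂ m₁ b)
    (ha₁ : a ≤ m₁) (ha₂ : a ≤ m₂) (hb₁ : m₁ ≤ b) (hb₂ : m₂ ≤ b) : m₁ = m₂ :=
  le_antisymm (h₁₂ ha₂ hb₁) (h₂₁ ha₁ hb₂)

namespace ModelStr

variable (M : ModelStr α) {a b m₁ m₂ : α}

theorem eq_of_acyclicCof_fib_factorizations
    (c₁ : M.Cof a m₁) (w₁ : M.We a m₁) (f₁ : M.Fib m₁ b)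
    (c₂ : M.Cof a m₂) (w₂ : M.We a m₂) (f₂ : M.Fib m₂ b) : m₁ = m₂ :=
  eq_of_lifts_of_lifts (M.lift₂ a m₁ m₂ b c₁ w₁ f₂) (M.lift₂ a m₂ m₁ b c₂ w₂ f₁)
    (M.cof_le _ _ c₁) (M.cof_le _ _ c₂) (M.fib_le _ _ f₁) (M.fib_le _ _ f₂)

theorem eq_of_cof_acyclicFib_factorizations
    (c₁ : M.Cof a m₁) (f₁ : M.Fib m₁ b) (w₁ : M.We m₁ b)
    (c₂ : M.Cof a m₂) (f₂ : M.Fib m₂ b) (w₂ : M.We m₂ b) : m₁ = m₂ :=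
  eq_of_lifts_of_lifts (M.lift₁ a m₁ m₂ b c₁ f₂ w₂) (M.lift₁ a m₂ m₁ b c₂ f₁ w₁)
    (M.cof_le _ _ c₁) (M.cof_le _ _ c₂) (M.fib_le _ _ f₁) (M.fib_le _ _ f₂)

end ModelStr

/-- In a model structure on a poset, factorizations into an acyclic
cofibration followed by a fibration, or a cofibration followed by an acyclic fibration,
are unique (the intermediate objects coincide). -/
theorem factorizations_unique (M : ModelStr α) :
    (∀ a b m₁ m₂ : α,
      M.Cof a m₁ → M.We a m₁ → M.Fib m₁ b →
      M.Cof a m₂ → M.We a m₂ → M.Fib m₂ b → m₁ = m₂) ∧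
    (∀ a b m₁ m₂ : α,
      M.Cof a m₁ → M.Fib m₁ b → M.We m₁ b →
      M.Cof a m₂ → M.Fib m₂ b → M.We m₂ b → m₁ = m₂) :=
  ⟨fun _ _ _ _ => M.eq_of_acyclicCof_fib_factorizations,
    fun _ _ _ _ => M.eq_of_cof_acyclicFib_factorizations⟩
end

section
/- Let C be a bicomplete skeletal poset, W a subcategory satisfying strong 2-of-3, and χ a choice of centers. Then J_χ ⊆ W_c^χ and Q_χ ⊆ W_f^χ. -/
/-!
We model a bicomplete skeletal poset as a complete lattice `α`, viewed as a category
with a (unique) morphism `a → b` iff `a ≤ b`.  Products are infima, coproducts are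
suprema, pushouts of `a → b` along `a → c` are `c → b ⊔ c`, pullbacks of `x → y`
along `z → y` are `x ⊓ z → z`.  A class of morphisms is a relation `α → α → Prop`.
-/

variable {α : Type*} [CompleteLattice α]

/-- `W_c^χ`: morphisms `a → b` of `W` all of whose non-identity pushouts
`c → b ⊔ c` are in `W` but not in `Q_χ`. -/
def Wc (W : α → α → Prop) (χ : α → α) (a b : α) : Prop :=
  W a b ∧ ∀ c : α, a ≤ c → b ⊔ c ≠ c → (W c (b ⊔ c) ∧ ¬ Qc W χ c (b ⊔ c))

/-- `W_f^χ`: morphisms `x → y` of `W` all of whose non-identity pullbacks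
`x ⊓ z → z` are in `W` but not in `J_χ`. -/
def Wf (W : α → α → Prop) (χ : α → α) (x y : α) : Prop :=
  W x y ∧ ∀ z : α, z ≤ y → x ⊓ z ≠ z → (W (x ⊓ z) z ∧ ¬ Jc W χ (x ⊓ z) z)

/-!
If `a → b` is in `J_χ` and `a ≤ c`, invariance of `χ` along `W` gives `b ≤ χ b = χ a ≤ χ c`.
Hence the pushout `c → b ⊔ c` is the first factor of `c → b ⊔ c → c ⊔ χ c`, whose composite
is in `W`, so strong 2-of-3 puts it in `W`; and a morphism `χ c → c` would give `b ≤ c`,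
making the pushout an identity. The statement for `Q_χ` is the order dual.
-/

namespace IsCenters

variable {W : α → α → Prop} {χ : α → α}

theorem le_center_of_le (hχ : IsCenters W χ) {a b c : α} (hab : W a b) (hb : b ≤ χ b)
    (hac : a ≤ c) : b ≤ χ c :=
  hb.trans (hχ.2.1 a b hab ▸ hχ.1 hac)

theorem center_le_of_le (hχ : IsCenters W χ) {a b z : α} (hab : W a b) (ha : χ a ≤ a)
    (hzb : z ≤ b) : χ z ≤ a :=
  (hχ.2.1 a b hab ▸ hχ.1 hzb).trans ha

theorem W_sup_of_le_center (hS : S2OF3 W) (hχ : IsCenters W χ) {b c : α} (hb : b ≤ χ c) :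
    W c (b ⊔ c) :=
  (hS _ _ _ le_sup_right (sup_le (hb.trans le_sup_right) le_sup_left) (hχ.2.2 c).2.2.1).1

theorem W_inf_of_center_le (hS : S2OF3 W) (hχ : IsCenters W χ) {a z : α} (hz : χ z ≤ a) :
    W (a ⊓ z) z :=
  (hS _ _ _ (le_inf (inf_le_right.trans hz) inf_le_left) inf_le_right (hχ.2.2 z).2.1).2

theorem wc_of_jc (hS : S2OF3 W) (hχ : IsCenters W χ) {a b : α} (h : Jc W χ a b) :
    Wc W χ a b := by
  refine ⟨h.1, fun c hac hne => ?_⟩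
  have hb : b ≤ χ c := hχ.le_center_of_le h.1 h.2 hac
  exact ⟨W_sup_of_le_center hS hχ hb, fun hQ => hne (sup_eq_right.2 (hb.trans hQ.2))⟩

theorem wf_of_qc (hS : S2OF3 W) (hχ : IsCenters W χ) {a b : α} (h : Qc W χ a b) :
    Wf W χ a b := by
  refine ⟨h.1, fun z hzb hne => ?_⟩
  have hz : χ z ≤ a := hχ.center_le_of_le h.1 h.2 hzb
  exact ⟨W_inf_of_center_le hS hχ hz, fun hJ => hne (inf_eq_right.2 (hJ.2.trans hz))⟩

end IsCenters

theorem Jc_subset_Wc_general (W : α → α → Prop) (χ : α → α)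
    (hS : S2OF3 W) (hχ : IsCenters W χ) :
    (∀ a b : α, Jc W χ a b → Wc W χ a b) ∧
    (∀ a b : α, Qc W χ a b → Wf W χ a b) :=
  ⟨fun _ _ => hχ.wc_of_jc hS, fun _ _ => hχ.wf_of_qc hS⟩

/-- `J_χ ⊆ W_c^χ` and `Q_χ ⊆ W_f^χ`. -/
theorem Jc_subset_Wc (W : α → α → Prop) (χ : α → α)
    (hWle : ∀ a b : α, W a b → a ≤ b)
    (hWrefl : ∀ a : α, W a a)
    (hWtrans : ∀ a b c : α, W a b → W b c → W a c)
    (hS : S2OF3 W) (hχ : IsCenters W χ) :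
    (∀ a b : α, Jc W χ a b → Wc W χ a b) ∧
    (∀ a b : α, Qc W χ a b → Wf W χ a b) :=
  Jc_subset_Wc_general W χ hS hχ
end

section
/- Let C be a bicomplete skeletal poset, W a subcategory satisfying strong 2-of-3, and χ a choice of centers. Then every morphism f : X → Y in W factors as X → Y × (X ∪ χ(X)) → Y, where the first morphism lies in W_c^χ and the second lies in W_f^χ and lifts on the right of every morphism in W_c^χ. -/
/-!
We model a bicomplete skeletal poset as a complete lattice `α`, viewed as a category
with a (unique) morphism `a → b` iff `a ≤ b`.  Products are infima, coproducts are
suprema, pushouts of `a → b` along `a → c` are `c → b ⊔ c`, pullbacks of `x → y`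
along `z → y` are `x ⊓ z → z`.  A class of morphisms is a relation `α → α → Prop`.
-/

variable {α : Type*} [CompleteLattice α]

/-!
Put `M := Y ⊓ (X ⊔ χ X)`. Since `χ` is constant along `W`, `χ (X ⊔ χ X) = χ X ≤ X ⊔ χ X`, so
a nontrivial pushout of a `W_c^χ`-morphism into `X ⊔ χ X` would lie in `Q_χ`: such morphisms
cannot leave `X ⊔ χ X`, which is the lifting property against `M → Y`. That `X → M` is in
`W_c^χ` and `M → Y` in `W_f^χ` follows from strong 2-of-3 applied inside the center squares
`c → c ⊔ χ c` and `z ⊓ χ z → z`.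
-/

section

variable {W : α → α → Prop} {χ : α → α} {a b c x y : α}

theorem Wc.le_of_le_of_center_le (h : Wc W χ a b) (hac : a ≤ c) (hc : χ c ≤ c) : b ≤ c := by
  by_contra hbc
  obtain ⟨hW, hQ⟩ := h.2 c hac fun heq => hbc (sup_eq_right.mp heq)
  exact hQ ⟨hW, hc⟩

theorem Wc.lifts_inf (h : Wc W χ a b) (hc : χ c ≤ c) (y : α) : Lifts a b (y ⊓ c) y :=
  fun ha hb => le_inf hb (h.le_of_le_of_center_le (ha.trans inf_le_right) hc)

theorem Wc.of_le_sup_center (hS : S2OF3 W) (hmono : Monotone χ)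
    (hsup : ∀ c, W c (c ⊔ χ c)) (hab : W a b) (hb : b ≤ a ⊔ χ a) : Wc W χ a b := by
  refine ⟨hab, fun c hac hne => ?_⟩
  have hbc : b ⊔ c ≤ c ⊔ χ c :=
    sup_le (hb.trans (sup_le_sup hac (hmono hac))) le_sup_left
  refine ⟨(hS c (b ⊔ c) (c ⊔ χ c) le_sup_right hbc (hsup c)).1, fun ⟨_, hχc⟩ => hne ?_⟩
  exact le_antisymm (hbc.trans (sup_le le_rfl hχc)) le_sup_right

theorem Wf.of_inf_center_le (hS : S2OF3 W) (hmono : Monotone χ)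
    (hinf : ∀ z, W (z ⊓ χ z) z) (hxy : W x y) (hx : y ⊓ χ y ≤ x) : Wf W χ x y := by
  refine ⟨hxy, fun z hzy hne => ?_⟩
  have hxz : z ⊓ χ z ≤ x ⊓ z :=
    le_inf ((inf_le_inf hzy (hmono hzy)).trans hx) inf_le_left
  refine ⟨(hS (z ⊓ χ z) (x ⊓ z) z hxz inf_le_right (hinf z)).2, fun ⟨_, hzχ⟩ => hne ?_⟩
  exact le_antisymm inf_le_right ((le_inf le_rfl hzχ).trans hxz)

theorem IsCenters.center_sup_center_le (hχ : IsCenters W χ) (a : α) :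
    χ (a ⊔ χ a) ≤ a ⊔ χ a := by
  rw [← hχ.2.1 _ _ (hχ.2.2 a).2.2.1]
  exact le_sup_right

end

theorem factorization_through_center_general (W : α → α → Prop) (χ : α → α)
    (hWle : ∀ a b : α, W a b → a ≤ b)
    (hS : S2OF3 W) (hχ : IsCenters W χ)
    (X Y : α) (hf : W X Y) :
    Wc W χ X (Y ⊓ (X ⊔ χ X)) ∧ Wf W χ (Y ⊓ (X ⊔ χ X)) Y ∧
      (∀ a b : α, Wc W χ a b → Lifts a b (Y ⊓ (X ⊔ χ X)) Y) := by
  obtain ⟨hXM, hMY⟩ :=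
    hS X (Y ⊓ (X ⊔ χ X)) Y (le_inf (hWle X Y hf) le_sup_left) inf_le_left hf
  have hχY : χ Y ≤ X ⊔ χ X := by
    rw [← hχ.2.1 X Y hf]
    exact le_sup_right
  exact ⟨Wc.of_le_sup_center hS hχ.1 (fun c => (hχ.2.2 c).2.2.1) hXM inf_le_right,
    Wf.of_inf_center_le hS hχ.1 (fun z => (hχ.2.2 z).2.1) hMY (inf_le_inf_left Y hχY),
    fun a b h => h.lifts_inf (hχ.center_sup_center_le X) Y⟩

/-- Every morphism `f : X → Y` in `W` factors as
`X → Y ⊓ (X ⊔ χ X) → Y`, where the first morphism lies in `W_c^χ` and the second lies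
in `W_f^χ` and lifts on the right of every morphism of `W_c^χ`. -/
theorem factorization_through_center (W : α → α → Prop) (χ : α → α)
    (hWle : ∀ a b : α, W a b → a ≤ b)
    (hWrefl : ∀ a : α, W a a)
    (hWtrans : ∀ a b c : α, W a b → W b c → W a c)
    (hS : S2OF3 W) (hχ : IsCenters W χ)
    (X Y : α) (hf : W X Y) :
    Wc W χ X (Y ⊓ (X ⊔ χ X)) ∧ Wf W χ (Y ⊓ (X ⊔ χ X)) Y ∧
      (∀ a b : α, Wc W χ a b → Lifts a b (Y ⊓ (X ⊔ χ X)) Y) :=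
  factorization_through_center_general W χ hWle hS hχ X Y hf
end

section
/- Let C be a small bicomplete poset with model structure, and let C^c be the full subcategory of cofibrant objects. Then C^c is bicomplete: it has all coproducts (computed as in C), and the product of a family {A_i} in C^c is given by the cofibrant replacement of the product in C. -/
/-!
We model a bicomplete skeletal poset as a complete lattice `α`, viewed as a category
with a (unique) morphism `a → b` iff `a ≤ b`.  Products are infima, coproducts are
suprema, pushouts of `a → b` along `a → c` are `c → b ⊔ c`, pullbacks of `x → y`
along `z → y` are `x ⊓ z → z`.  A class of morphisms is a relation `α → α → Prop`.
-/

variable {α : Type*} [CompleteLattice α]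

/-
Both halves come from the lifting of cofibrations against acyclic fibrations. A supremum of
cofibrant objects lifts against every acyclic fibration because each of them does, so it is
cofibrant by maximality of the cofibrations. A cofibrant replacement `p → ⨅ i, A i` is an acyclic
fibration, so a cofibrant `d` lies below `p` as soon as it lies below the infimum.
-/

namespace ModelStr

variable (M : ModelStr α)

theorem le_of_cofibrant_of_acyclicFib {d x y : α} (hd : M.Cof ⊥ d) (hf : M.Fib x y)
    (hw : M.We x y) (hdy : d ≤ y) : d ≤ x :=
  M.lift₁ ⊥ d x y hd hf hw bot_le hdy

theorem cofibrant_iSup {ι : Type*} {A : ι → α} (hA : ∀ i, M.Cof ⊥ (A i)) :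
    M.Cof ⊥ (⨆ i, A i) :=
  M.max₁L _ _ bot_le fun _ _ hf hw _ hy =>
    iSup_le fun i => M.le_of_cofibrant_of_acyclicFib (hA i) hf hw ((le_iSup A i).trans hy)

theorem cofibrant_le_iff_of_acyclicFib {d p b : α} (hd : M.Cof ⊥ d) (hf : M.Fib p b)
    (hw : M.We p b) : d ≤ b ↔ d ≤ p :=
  ⟨M.le_of_cofibrant_of_acyclicFib hd hf hw, fun h => h.trans (M.we_le p b hw)⟩

end ModelStr

/-- The full subcategory `C^c` of cofibrant objects is bicomplete:
coproducts of cofibrant objects (computed as in `C`, i.e. suprema) are cofibrant, and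
the product in `C^c` of a family of cofibrant objects is the cofibrant replacement of
their product (infimum) in `C`. -/
theorem cofibrant_subcategory_bicomplete (M : ModelStr α) :
    (∀ (ι : Type) (A : ι → α), (∀ i, M.Cof ⊥ (A i)) → M.Cof ⊥ (⨆ i, A i)) ∧
    (∀ (ι : Type) (A : ι → α), (∀ i, M.Cof ⊥ (A i)) →
      ∃ p : α, M.Cof ⊥ p ∧ M.Fib p (⨅ i, A i) ∧ M.We p (⨅ i, A i) ∧
        ∀ d : α, M.Cof ⊥ d → ((∀ i, d ≤ A i) ↔ d ≤ p)) := by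
  refine ⟨fun _ _ hA => M.cofibrant_iSup hA, fun ι A _ => ?_⟩
  obtain ⟨p, hc, hf, hw⟩ := M.fact₁ ⊥ (⨅ i, A i) bot_le
  exact ⟨p, hc, hf, hw, fun d hd =>
    le_iInf_iff.symm.trans (M.cofibrant_le_iff_of_acyclicFib hd hf hw)⟩
end

section
/- Let C be a poset with model structure in which every object is both cofibrant and fibrant. Then every weak equivalence is an isomorphism, every morphism is a cofibration, and every morphism is a fibration. -/
/-!
We model a bicomplete skeletal poset as a complete lattice `α`, viewed as a category
with a (unique) morphism `a → b` iff `a ≤ b`.  Products are infima, coproducts are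
suprema, pushouts of `a → b` along `a → c` are `c → b ⊔ c`, pullbacks of `x → y`
along `z → y` are `x ⊓ z → z`.  A class of morphisms is a relation `α → α → Prop`.
-/

variable {α : Type*} [CompleteLattice α]

/-!
In a poset a lifting problem is solvable as soon as the relevant inequality holds. If
`⊥ → b` is a cofibration, any `a → b` therefore lifts against every acyclic fibration by
lifting `⊥ → b` instead; dually every map into a fibrant object is a fibration. A weak
equivalence that is both a cofibration and a fibration lifts against itself, which in a
poset forces it to be an identity.
-/

namespace ModelStr

variable (M : ModelStr α)

theorem cof_of_le_of_cof_bot {a b : α} (hb : M.Cof ⊥ b) (hab : a ≤ b) : M.Cof a b :=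
  M.max₁L a b hab fun x y hxy hw _ hby => M.lift₁ ⊥ b x y hb hxy hw bot_le hby

theorem fib_of_le_of_fib_top {a b : α} (ha : M.Fib a ⊤) (hab : a ≤ b) : M.Fib a b :=
  M.max₂R a b hab fun _ y hc hw hax _ => M.lift₂ _ y a ⊤ hc hw ha hax le_top

theorem eq_of_we_of_cof_of_fib {a b : α} (hw : M.We a b) (hc : M.Cof a b) (hf : M.Fib a b) :
    a = b :=
  le_antisymm (M.we_le a b hw) (M.lift₂ a b a b hc hw hf le_rfl le_rfl)

end ModelStr

/-- If every object of a poset model structure is both cofibrant and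
fibrant, then every weak equivalence is an isomorphism (an identity, as the poset is
skeletal), and every morphism is both a cofibration and a fibration. -/
theorem all_cofibrant_fibrant (M : ModelStr α)
    (hc : ∀ a : α, M.Cof ⊥ a) (hfib : ∀ a : α, M.Fib a ⊤) :
    (∀ a b : α, M.We a b → a = b) ∧
    (∀ a b : α, a ≤ b → M.Cof a b ∧ M.Fib a b) := by
  have hcof_fib : ∀ a b : α, a ≤ b → M.Cof a b ∧ M.Fib a b := fun a b hab =>
    ⟨M.cof_of_le_of_cof_bot (hc b) hab, M.fib_of_le_of_fib_top (hfib a) hab⟩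
  refine ⟨fun a b hw => ?_, hcof_fib⟩
  obtain ⟨hcof_ab, hfib_ab⟩ := hcof_fib a b (M.we_le a b hw)
  exact M.eq_of_we_of_cof_of_fib hw hcof_ab hfib_ab
end

section
/- Let C be a bicomplete poset, with model structure C₁ given by (we, cof, fib) and define J = (cof ∩ we) ∪ J_χ where χ is the choice of centers associated to C₁. If every morphism f : X → Y that is a fibration in C₁ and satisfies 1_X ∈ Q_χ (i.e., χ(X) → X exists) is considered, then f lies in J^⧄. -/
/-!
We model a bicomplete skeletal poset as a complete lattice `α`, viewed as a category
with a (unique) morphism `a → b` iff `a ≤ b`.  Products are infima, coproducts are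
suprema, pushouts of `a → b` along `a → c` are `c → b ⊔ c`, pullbacks of `x → y`
along `z → y` are `x ⊓ z → z`.  A class of morphisms is a relation `α → α → Prop`.
-/

variable {α : Type*} [CompleteLattice α]

theorem Jc.lifts_of_center_le {W : α → α → Prop} {χ : α → α} (hχ : IsCenters W χ)
    {a b X : α} (hab : Jc W χ a b) (hX : χ X ≤ X) (Y : α) : Lifts a b X Y := by
  intro haX _
  calc b ≤ χ b := hab.2
    _ = χ a := (hχ.2.1 a b hab.1).symm
    _ ≤ χ X := hχ.1 haX
    _ ≤ X := hX

theorem fib_in_new_fib_general (M : ModelStr α) (χ : α → α)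
    (hχ : IsCenters M.We χ)
    (X Y : α) (hfib : M.Fib X Y) (hQ : χ X ≤ X) :
    ∀ a b : α, ((M.Cof a b ∧ M.We a b) ∨ Jc M.We χ a b) → Lifts a b X Y := by
  rintro a b (⟨hcof, hwe⟩ | hJ)
  · exact M.lift₂ a b X Y hcof hwe hfib
  · exact hJ.lifts_of_center_le hχ hQ Y

/-- Let `χ` be the choice of centers associated to a model structure
(sending each object to the unique cofibrant-fibrant object of its weak equivalence
class).  Every fibration `f : X → Y` with `1_X ∈ Q_χ` (i.e. `χ X → X` exists) lies in
`J^⧄` where `J = (Cof ∩ We) ∪ J_χ`. -/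
theorem fib_in_new_fib (M : ModelStr α) (χ : α → α)
    (hχ : IsCenters M.We χ)
    (hcf : ∀ a : α, M.Cof ⊥ (χ a) ∧ M.Fib (χ a) ⊤ ∧ Relation.EqvGen M.We a (χ a))
    (X Y : α) (hfib : M.Fib X Y) (hQ : χ X ≤ X) :
    ∀ a b : α, ((M.Cof a b ∧ M.We a b) ∨ Jc M.We χ a b) → Lifts a b X Y :=
  fib_in_new_fib_general M χ hχ X Y hfib hQ
end

section
/- Let C be a bicomplete skeletal poset with model structure and let A, A' be two cofibrant-fibrant objects in the same weak equivalence class. Then A = A'. -/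
/-!
We model a bicomplete skeletal poset as a complete lattice `α`, viewed as a category
with a (unique) morphism `a → b` iff `a ≤ b`.  Products are infima, coproducts are
suprema, pushouts of `a → b` along `a → c` are `c → b ⊔ c`, pullbacks of `x → y`
along `z → y` are `x ⊓ z → z`.  A class of morphisms is a relation `α → α → Prop`.
-/

variable {α : Type*} [CompleteLattice α]

/-!
Fix a cofibrant object `A`. The property "`a` has a weak equivalence to a fibrant object lying
above `A`" is invariant under weak equivalences `a → b` in both directions: backwards by
composing, forwards by first replacing `a → r` by an acyclic cofibration `a → m` into a fibrant
`m ≥ A` and then pushing it out along `a → b`. It holds for `A` itself, and for a fibrant `X`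
it forces `A ≤ X`, since an acyclic cofibration out of `X` into a fibrant object retracts onto
`X`. So weakly equivalent cofibrant-fibrant objects lie below each other.
-/

namespace ModelStr

variable (M : ModelStr α)

theorem fib_trans {a b c : α} (hab : M.Fib a b) (hbc : M.Fib b c) : M.Fib a c := by
  refine M.max₂R a c ((M.fib_le _ _ hab).trans (M.fib_le _ _ hbc))
    fun x y hxy hwxy hxa hyc => ?_
  have hyb : y ≤ b := M.lift₂ x y b c hxy hwxy hbc (hxa.trans (M.fib_le _ _ hab)) hyc
  exact M.lift₂ x y a b hxy hwxy hab hxa hyb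

theorem cof_we_sup_of_le {a b m : α} (hcam : M.Cof a m) (hwam : M.We a m) (hab : a ≤ b) :
    M.Cof b (b ⊔ m) ∧ M.We b (b ⊔ m) :=
  M.max₂L b (b ⊔ m) le_sup_left fun x y hxy hbx hsy =>
    sup_le hbx (M.lift₂ a m x y hcam hwam hxy (hab.trans hbx) (le_sup_right.trans hsy))

theorem exists_cof_we_of_we_fibrant {a r : α} (har : M.We a r) (hr : M.Fib r ⊤) :
    ∃ m, M.Cof a m ∧ M.We a m ∧ M.Fib m ⊤ ∧ M.Fib m r ∧ M.We m r := by
  obtain ⟨m, hcam, hwam, hfmr⟩ := M.fact₂ a r (M.we_le _ _ har)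
  exact ⟨m, hcam, hwam, M.fib_trans hfmr hr, hfmr,
    M.two_of_three₂ a m r (M.cof_le _ _ hcam) (M.fib_le _ _ hfmr) hwam har⟩

def HasFibrantReplacementAbove (A a : α) : Prop :=
  ∃ r, M.We a r ∧ M.Fib r ⊤ ∧ A ≤ r

variable {M}

theorem HasFibrantReplacementAbove.exists_cof_we {A a : α} (hA : M.Cof ⊥ A)
    (h : M.HasFibrantReplacementAbove A a) :
    ∃ m, M.Cof a m ∧ M.We a m ∧ M.Fib m ⊤ ∧ A ≤ m := by
  obtain ⟨r, har, hr, hAr⟩ := h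
  obtain ⟨m, hcam, hwam, hm, hfmr, hwmr⟩ := M.exists_cof_we_of_we_fibrant har hr
  exact ⟨m, hcam, hwam, hm, M.lift₁ ⊥ A m r hA hfmr hwmr bot_le hAr⟩

theorem HasFibrantReplacementAbove.of_we {A a b : α} (hab : M.We a b)
    (h : M.HasFibrantReplacementAbove A b) : M.HasFibrantReplacementAbove A a := by
  obtain ⟨r, hbr, hr, hAr⟩ := h
  exact ⟨r, M.two_of_three₁ a b r (M.we_le _ _ hab) (M.we_le _ _ hbr) hab hbr, hr, hAr⟩

theorem HasFibrantReplacementAbove.we {A a b : α} (hA : M.Cof ⊥ A) (hab : M.We a b)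
    (h : M.HasFibrantReplacementAbove A a) : M.HasFibrantReplacementAbove A b := by
  obtain ⟨m, hcam, hwam, -, hAm⟩ := h.exists_cof_we hA
  obtain ⟨hcbs, hwbs⟩ := M.cof_we_sup_of_le hcam hwam (M.we_le _ _ hab)
  obtain ⟨r, hcsr, hwsr, hr⟩ := M.fact₂ (b ⊔ m) ⊤ le_top
  have hsr : b ⊔ m ≤ r := M.cof_le _ _ hcsr
  exact ⟨r, M.two_of_three₁ b (b ⊔ m) r le_sup_left hsr hwbs hwsr, hr,
    hAm.trans (le_sup_right.trans hsr)⟩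

theorem hasFibrantReplacementAbove_iff_of_eqvGen {A a b : α} (hA : M.Cof ⊥ A)
    (hab : Relation.EqvGen M.We a b) :
    M.HasFibrantReplacementAbove A a ↔ M.HasFibrantReplacementAbove A b := by
  induction hab with
  | rel _ _ hw => exact ⟨.we hA hw, .of_we hw⟩
  | refl => rfl
  | symm _ _ _ ih => exact ih.symm
  | trans _ _ _ _ _ ih₁ ih₂ => exact ih₁.trans ih₂

theorem le_of_eqvGen {A X : α} (hA : M.Cof ⊥ A) (hX : M.Fib X ⊤)
    (hAX : Relation.EqvGen M.We A X) : A ≤ X := by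
  have hAA : M.HasFibrantReplacementAbove A A := by
    obtain ⟨m, hcm, hwm, hm⟩ := M.fact₂ A ⊤ le_top
    exact ⟨m, hwm, hm, M.cof_le _ _ hcm⟩
  obtain ⟨m, hcXm, hwXm, -, hAm⟩ :=
    ((hasFibrantReplacementAbove_iff_of_eqvGen hA hAX).mp hAA).exists_cof_we hA
  exact hAm.trans (M.lift₂ X m X ⊤ hcXm hwXm hX le_rfl le_top)

end ModelStr

/-- Two cofibrant-fibrant objects in the same weak equivalence class
(i.e. connected by a zigzag of weak equivalences) of a model structure on a bicomplete
skeletal poset are equal. -/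
theorem cofibrant_fibrant_unique (M : ModelStr α) (A A' : α)
    (hAc : M.Cof ⊥ A) (hAf : M.Fib A ⊤)
    (hA'c : M.Cof ⊥ A') (hA'f : M.Fib A' ⊤)
    (h : Relation.EqvGen M.We A A') : A = A' :=
  le_antisymm (M.le_of_eqvGen hAc hA'f h) (M.le_of_eqvGen hA'c hAf (.symm _ _ h))
end
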